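/- Let ℓ be a line in ℝ² containing no point of S, and let w be the number of pairs {P, Q} of points of S such that PQ is a halving line of S and the points P and Q lie strictly on opposite sides of ℓ (i.e., the segment PQ straddles ℓ). Then n ≥ 2w. -/

import Mathlib

/-- Planar cross product (signed area determinant) of two vectors in `ℝ × ℝ`. -/
def det2 (u v : ℝ × ℝ) : ℝ := u.1 * v.2 - u.2 * v.1

/-- Dot product of two vectors in `ℝ × ℝ`. -/
def dot2 (u v : ℝ × ℝ) : ℝ := u.1 * v.1 + u.2 * v.2

/-- A finite set of points of the plane is in general position if no three
distinct points of it are collinear. -/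
def GenPos (S : Finset (ℝ × ℝ)) : Prop :=
  ∀ P ∈ S, ∀ Q ∈ S, ∀ R ∈ S, P ≠ Q → P ≠ R → Q ≠ R →
    ¬ Collinear ℝ ({P, Q, R} : Set (ℝ × ℝ))

/-- The line through the two distinct points `P, Q ∈ S` is a halving line of `S`:
each of the two open half-planes it determines contains exactly
`(S.card - 2) / 2` points of `S`. -/
def IsHalving (S : Finset (ℝ × ℝ)) (P Q : ℝ × ℝ) : Prop :=
  P ∈ S ∧ Q ∈ S ∧ P ≠ Q ∧
  {X ∈ (S : Set (ℝ × ℝ)) | 0 < det2 (Q - P) (X - P)}.ncard = (S.card - 2) / 2 ∧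
  {X ∈ (S : Set (ℝ × ℝ)) | det2 (Q - P) (X - P) < 0}.ncard = (S.card - 2) / 2

/-- Degree of a point in the underlying graph of `S`: the number of points `Q`
such that the line `PQ` is a halving line of `S`. -/
noncomputable def hdeg (S : Finset (ℝ × ℝ)) (P : ℝ × ℝ) : ℕ :=
  {Q : ℝ × ℝ | IsHalving S P Q}.ncard

/-- The number of halving lines of `S`, counted as unordered pairs of points. -/
noncomputable def numHalvingLines (S : Finset (ℝ × ℝ)) : ℕ :=
  {e : Finset (ℝ × ℝ) | ∃ P Q : ℝ × ℝ, e = {P, Q} ∧ IsHalving S P Q}.ncard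

/-- The underlying graph of `S`: vertices are the points of `S`, and two points
are adjacent exactly when the line through them is a halving line of `S`. -/
def underlyingGraph (S : Finset (ℝ × ℝ)) : SimpleGraph {x : ℝ × ℝ // x ∈ S} where
  Adj P Q := IsHalving S P.1 Q.1 ∧ IsHalving S Q.1 P.1
  symm := ⟨fun _ _ h => ⟨h.2, h.1⟩⟩
  loopless := ⟨fun _ h => h.1.2.2.1 rfl⟩


/-!
Perturb the direction of `ℓ` to a direction `d` parallel to no segment of `S`, keeping the points
on the negative side of `ℓ` before those on its positive side in the order along `d`.
For `p ∈ S`, sweep the lines through `p` by their angle with `d`: the number of points of `S` to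
the left of the swept line changes by `±1` whenever it passes a point, and the halving lines
through `p` are exactly the crossings of level `(n - 2) / 2`. Up- and down-crossings alternate,
so the halving neighbours of `p` ahead of it and behind it differ in number by at most one.
Summing over the points on one side of `ℓ`, the halving edges inside that side cancel and the
straddling ones remain, so their number is at most the number of points on either side of `ℓ`.
-/

open Finset

theorem Finset.sum_telescope_of_injOn {α β M G : Type*} [DecidableEq α] [LinearOrder β]
    [AddCommMonoid M] [AddCommGroup G] (τ : α → β) (x : α → M) (f : M → G) {T : Finset α}
    (hτ : Set.InjOn τ T) :
    ∑ q ∈ T, (f (∑ r ∈ T with τ r < τ q, x r + x q) - f (∑ r ∈ T with τ r < τ q, x r))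
      = f (∑ r ∈ T, x r) - f 0 := by
  induction T using Finset.induction_on_max_value τ with
  | empty => simp
  | insert a s has hmax ih =>
    have hbelow_a : {r ∈ insert a s | τ r < τ a} = s := by
      ext r
      simp only [mem_filter, mem_insert]
      refine ⟨fun ⟨hr, hlt⟩ => hr.resolve_left (by rintro rfl; exact hlt.false), fun hr => ⟨.inr hr,
        (hmax r hr).lt_of_ne fun h => ?_⟩⟩
      exact has (hτ (by simp [hr]) (by simp) h ▸ hr)
    have hbelow : ∀ q ∈ s, {r ∈ insert a s | τ r < τ q} = {r ∈ s | τ r < τ q} := fun q hq => by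
      rw [filter_insert, if_neg (hmax q hq).not_gt]
    have hrest : ∑ q ∈ s, (f (∑ r ∈ insert a s with τ r < τ q, x r + x q)
          - f (∑ r ∈ insert a s with τ r < τ q, x r))
        = ∑ q ∈ s, (f (∑ r ∈ s with τ r < τ q, x r + x q) - f (∑ r ∈ s with τ r < τ q, x r)) :=
      sum_congr rfl fun q hq => by rw [hbelow q hq]
    rw [sum_insert has, hbelow_a, hrest, ih (hτ.mono (by simp)), sum_insert has, add_comm (x a)]
    abel

lemma card_filter_pos_mul_sub_eq {α : Type*} [DecidableEq α] {T : Finset α} {τ y : α → ℝ}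
    (hτ : Set.InjOn τ T) (hy : ∀ r ∈ T, y r ≠ 0) {q : α} (hq : q ∈ T) :
    (#{r ∈ T | 0 < y r * (τ q - τ r)} : ℤ)
      = #{r ∈ T | y r < 0} + ∑ r ∈ T with τ r < τ q, (SignType.sign (y r) : ℤ)
        - if y q < 0 then 1 else 0 := by
  have hqterm : (if y q < 0 then 1 else 0 : ℤ)
      = ∑ r ∈ T, if r = q then (if y r < 0 then 1 else 0) else 0 := by
    rw [sum_ite_eq' T q, if_pos hq]
  rw [hqterm, natCast_card_filter, natCast_card_filter, sum_filter, ← sum_add_distrib,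
    ← sum_sub_distrib]
  refine sum_congr rfl fun r hr => ?_
  rcases (hy r hr).lt_or_gt with hyr | hyr <;> rcases lt_trichotomy (τ r) (τ q) with h | h | h
  case inl.inr.inl | inr.inr.inl =>
    obtain rfl := hτ hr hq h
    simp
  all_goals
    have hrq : r ≠ q := by rintro rfl; exact lt_irrefl _ h
    first
    | rw [if_pos (by nlinarith)]
    | rw [if_neg (not_lt.2 (by nlinarith))]
    simp [sign_neg, sign_pos, hyr, hyr.not_gt, h, h.not_gt, hrq]

lemma sum_sum_eq_neg_sum_sum_of_antisymm {α : Type*} (s t : Finset α) {g : α → α → ℤ}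
    (hg : ∀ x y, g y x = -g x y) : ∑ x ∈ s, ∑ y ∈ t, g x y = -∑ x ∈ t, ∑ y ∈ s, g x y := by
  refine sum_comm.trans ?_
  simp only [← sum_neg_distrib]
  exact sum_congr rfl fun y _ => sum_congr rfl fun x _ => hg y x

theorem two_mul_sum_sum_le_card_add_card {α : Type*} [DecidableEq α] {s t : Finset α}
    (hst : Disjoint s t) {g : α → α → ℤ} (hg : ∀ x y, g y x = -g x y)
    (hbound : ∀ x ∈ s ∪ t, |∑ y ∈ s ∪ t, g x y| ≤ 1) :
    2 * ∑ x ∈ s, ∑ y ∈ t, g x y ≤ #s + #t := by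
  have hs : ∑ x ∈ s, ∑ y ∈ s ∪ t, g x y ≤ #s := by
    simpa using sum_le_sum fun x hx => (abs_le.1 (hbound x (subset_union_left hx))).2
  have ht : -(#t : ℤ) ≤ ∑ x ∈ t, ∑ y ∈ s ∪ t, g x y := by
    simpa using sum_le_sum fun x hx => (abs_le.1 (hbound x (subset_union_right hx))).1
  have hss := sum_sum_eq_neg_sum_sum_of_antisymm s s hg
  have htt := sum_sum_eq_neg_sum_sum_of_antisymm t t hg
  have hts := sum_sum_eq_neg_sum_sum_of_antisymm t s hg
  simp only [sum_union hst, sum_add_distrib] at hs ht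
  omega

lemma ncard_coe_sep_eq_card_filter {α : Type*} (s : Finset α) (P : α → Prop) [DecidablePred P] :
    {x ∈ (s : Set α) | P x}.ncard = #{x ∈ s | P x} := by
  rw [← Set.ncard_coe_finset, coe_filter]; rfl

lemma dot2_sq_add_det2_sq (a v : ℝ × ℝ) :
    dot2 a v ^ 2 + det2 a v ^ 2 = dot2 a a * dot2 v v := by
  simp only [dot2, det2]; ring

lemma dot2_self_pos {d : ℝ × ℝ} (hd : d ≠ 0) : 0 < dot2 d d := by
  have : d.1 ≠ 0 ∨ d.2 ≠ 0 := by
    by_contra! h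
    exact hd (Prod.ext h.1 h.2)
  unfold dot2
  rcases this with h | h <;> nlinarith [mul_self_pos.2 h, mul_self_nonneg d.1, mul_self_nonneg d.2]

lemma eq_smul_of_det2_eq_zero {u w : ℝ × ℝ} (hu : u ≠ 0) (h : det2 u w = 0) :
    w = (dot2 u w / dot2 u u) • u := by
  have hu' := (dot2_self_pos hu).ne'
  simp only [dot2, det2] at h hu' ⊢
  ext <;> simp only [Prod.smul_fst, Prod.smul_snd, smul_eq_mul] <;>
    rw [div_mul_eq_mul_div, eq_div_iff hu']
  · linear_combination (-u.2) * h
  · linear_combination u.1 * h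

lemma collinear_of_det2_eq_zero {p q r : ℝ × ℝ} (h : det2 (q - p) (r - p) = 0) :
    Collinear ℝ ({p, q, r} : Set (ℝ × ℝ)) := by
  by_cases hqp : q = p
  · simpa [hqp] using collinear_pair ℝ p r
  rw [collinear_iff_of_mem (Set.mem_insert p _)]
  refine ⟨q - p, ?_⟩
  rintro x (rfl | rfl | rfl)
  · exact ⟨0, by simp⟩
  · exact ⟨1, by simp⟩
  · exact ⟨_, by rw [← eq_smul_of_det2_eq_zero (sub_ne_zero.2 hqp) h, vadd_eq_add, sub_add_cancel]⟩

lemma GenPos.det2_ne_zero {S : Finset (ℝ × ℝ)} (hgp : GenPos S) {p q r : ℝ × ℝ}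
    (hp : p ∈ S) (hq : q ∈ S) (hr : r ∈ S) (hpq : p ≠ q) (hpr : p ≠ r) (hqr : q ≠ r) :
    det2 (q - p) (r - p) ≠ 0 :=
  fun h => hgp p hp q hq r hr hpq hpr hqr (collinear_of_det2_eq_zero h)

lemma det2_sub_sub_swap (p q x : ℝ × ℝ) : det2 (p - q) (x - q) = -det2 (q - p) (x - p) := by
  simp only [det2, Prod.fst_sub, Prod.snd_sub]; ring

/-- The cotangent of the angle from `d` to `v`; being invariant under `v ↦ -v`,
`cotAngle d (q - p)` parametrizes the line `pq` among the lines through `p`. -/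
noncomputable def cotAngle (d v : ℝ × ℝ) : ℝ := dot2 d v / det2 d v

lemma cotAngle_sub_cotAngle {d v w : ℝ × ℝ} (hv : det2 d v ≠ 0) (hw : det2 d w ≠ 0) :
    cotAngle d v - cotAngle d w = dot2 d d * det2 v w / (det2 d v * det2 d w) := by
  rw [cotAngle, cotAngle, div_sub_div _ _ hv hw]
  congr 1
  simp only [dot2, det2]; ring

lemma det2_eq_zero_of_cotAngle_eq {d v w : ℝ × ℝ} (hd : d ≠ 0) (hv : det2 d v ≠ 0)
    (hw : det2 d w ≠ 0) (h : cotAngle d v = cotAngle d w) : det2 v w = 0 := by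
  have := cotAngle_sub_cotAngle hv hw
  rw [h, sub_self, eq_comm, div_eq_zero_iff] at this
  simpa [(dot2_self_pos hd).ne', hv, hw] using this

lemma det2_mul_cotAngle_sub_pos_iff {d v w : ℝ × ℝ} (hd : d ≠ 0) (hv : det2 d v ≠ 0)
    (hw : det2 d w ≠ 0) :
    0 < det2 d w * (cotAngle d v - cotAngle d w) ↔ 0 < det2 d v * det2 v w := by
  have hdd := dot2_self_pos hd
  rw [cotAngle_sub_cotAngle hv hw,
    show det2 d w * (dot2 d d * det2 v w / (det2 d v * det2 d w))
      = dot2 d d / det2 d v ^ 2 * (det2 d v * det2 v w) by field_simp]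
  exact mul_pos_iff_of_pos_left (by positivity)

lemma GenPos.injOn_cotAngle {S : Finset (ℝ × ℝ)} (hgp : GenPos S) {p d : ℝ × ℝ} (hp : p ∈ S)
    (hd0 : d ≠ 0) (hd : ∀ q ∈ S, q ≠ p → det2 d (q - p) ≠ 0) :
    Set.InjOn (fun r => cotAngle d (r - p)) (S.erase p) := fun q hq r hr h => by
  by_contra hqr
  rw [mem_coe, mem_erase] at hq hr
  exact hgp.det2_ne_zero hp hq.2 hr.2 hq.1.symm hr.1.symm hqr
    (det2_eq_zero_of_cotAngle_eq hd0 (hd q hq.2 hq.1) (hd r hr.2 hr.1) h)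

lemma IsHalving.symm {S : Finset (ℝ × ℝ)} {p q : ℝ × ℝ} (h : IsHalving S p q) :
    IsHalving S q p := by
  obtain ⟨hp, hq, hpq, hpos, hneg⟩ := h
  refine ⟨hq, hp, hpq.symm, ?_, ?_⟩ <;>
    simpa only [det2_sub_sub_swap p q, neg_pos, neg_lt_zero]

lemma card_filter_det2_pos_add_card_filter_det2_neg {S : Finset (ℝ × ℝ)} (hgp : GenPos S)
    {p q : ℝ × ℝ} (hp : p ∈ S) (hq : q ∈ S) (hpq : p ≠ q) :
    #{r ∈ S | 0 < det2 (q - p) (r - p)} + #{r ∈ S | det2 (q - p) (r - p) < 0} = #S - 2 := by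
  have hzero : ∀ r ∈ S, det2 (q - p) (r - p) = 0 ↔ r = p ∨ r = q := by
    intro r hr
    refine ⟨fun h => ?_, ?_⟩
    · by_contra! hne
      exact hgp.det2_ne_zero hp hq hr hpq hne.1.symm hne.2.symm h
    · rintro (rfl | rfl) <;> simp only [det2, sub_self, Prod.fst_zero, Prod.snd_zero] <;> ring
  have hT : #((S.erase p).erase q) = #S - 2 := by
    rw [card_erase_of_mem (mem_erase.2 ⟨hpq.symm, hq⟩), card_erase_of_mem hp]; omega
  rw [← hT, ← card_filter_add_card_filter_not (s := (S.erase p).erase q)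
    (fun r => 0 < det2 (q - p) (r - p))]
  congr 2 <;> ext r <;> simp only [mem_filter, mem_erase]
  all_goals
    by_cases hr : r ∈ S
    · have := hzero r hr
      grind
    · simp [hr]

lemma isHalving_iff_card_filter_pos_mul {S : Finset (ℝ × ℝ)} (hgp : GenPos S)
    (heven : Even #S) {p q : ℝ × ℝ} (hp : p ∈ S) (hq : q ∈ S) (hpq : p ≠ q) {ε : ℝ}
    (hε : ε ≠ 0) :
    IsHalving S p q ↔ #{r ∈ S | 0 < ε * det2 (q - p) (r - p)} = (#S - 2) / 2 := by
  have hsides := card_filter_det2_pos_add_card_filter_det2_neg hgp hp hq hpq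
  have hhalf : #S - 2 = 2 * ((#S - 2) / 2) := by obtain ⟨k, hk⟩ := heven; omega
  simp only [IsHalving, ncard_coe_sep_eq_card_filter, hp, hq, hpq, true_and, ne_eq,
    not_false_eq_true]
  rcases hε.lt_or_gt with hε | hε
  · simp only [← smul_eq_mul, smul_pos_iff_of_neg_left hε]
    omega
  · simp only [mul_pos_iff_of_pos_left hε]
    omega

lemma isHalving_iff_card_filter_cotAngle {S : Finset (ℝ × ℝ)} (hgp : GenPos S)
    (heven : Even #S) {p q d : ℝ × ℝ} (hp : p ∈ S) (hq : q ∈ S) (hqp : q ≠ p) (hd0 : d ≠ 0)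
    (hd : ∀ r ∈ S, r ≠ p → det2 d (r - p) ≠ 0) :
    IsHalving S p q ↔ #{r ∈ S.erase p |
      0 < det2 d (r - p) * (cotAngle d (q - p) - cotAngle d (r - p))} = (#S - 2) / 2 := by
  rw [isHalving_iff_card_filter_pos_mul hgp heven hp hq hqp.symm (hd q hq hqp)]
  congr! 2
  ext r
  simp only [mem_filter, mem_erase]
  by_cases hrp : r = p
  · simp [hrp, det2]
  by_cases hrS : r ∈ S
  · rw [det2_mul_cotAngle_sub_pos_iff hd0 (hd q hq hqp) (hd r hrS hrp)]
    tauto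
  · simp [hrS]

open scoped Classical in
noncomputable def halvingSign (S : Finset (ℝ × ℝ)) (d p q : ℝ × ℝ) : ℤ :=
  if IsHalving S p q then SignType.sign (det2 d (q - p)) else 0

lemma halvingSign_swap (S : Finset (ℝ × ℝ)) (d p q : ℝ × ℝ) :
    halvingSign S d q p = -halvingSign S d p q := by
  have hswap : det2 d (p - q) = -det2 d (q - p) := by
    simp only [det2, Prod.fst_sub, Prod.snd_sub]; ring
  by_cases h : IsHalving S p q
  · simp [halvingSign, h, h.symm, hswap, Left.sign_neg]
  · simp [halvingSign, h, mt IsHalving.symm h]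

open scoped Classical in
lemma halvingSign_of_det2_pos {S : Finset (ℝ × ℝ)} {d p q : ℝ × ℝ} (h : 0 < det2 d (q - p)) :
    halvingSign S d p q = if IsHalving S p q then 1 else 0 := by
  simp only [halvingSign, sign_pos h, SignType.coe_one]

theorem abs_sum_halvingSign_le_one {S : Finset (ℝ × ℝ)} (hgp : GenPos S)
    (heven : Even #S) {p d : ℝ × ℝ} (hp : p ∈ S)
    (hd : ∀ q ∈ S, q ≠ p → det2 d (q - p) ≠ 0) :
    |∑ q ∈ S, halvingSign S d p q| ≤ 1 := by
  set T := S.erase p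
  set τ : ℝ × ℝ → ℝ := fun r => cotAngle d (r - p)
  set x : ℝ × ℝ → ℤ := fun r => SignType.sign (det2 d (r - p))
  set B : ℤ := ((#{r ∈ T | det2 d (r - p) < 0} : ℕ) : ℤ)
  set f : ℤ → ℤ := fun t => if (((#S - 2) / 2 : ℕ) : ℤ) < B + t then 1 else 0
  have hdT : ∀ r ∈ T, det2 d (r - p) ≠ 0 := fun r hr =>
    hd r (mem_of_mem_erase hr) (ne_of_mem_erase hr)
  have hd0 : d ≠ 0 := by
    obtain ⟨q, hq⟩ : T.Nonempty := by
      rw [← card_pos, card_erase_of_mem hp]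
      obtain ⟨k, hk⟩ := heven
      have := card_pos.2 ⟨p, hp⟩
      omega
    rintro rfl
    exact hdT q hq (by simp [det2])
  have hτ : Set.InjOn τ T := hgp.injOn_cotAngle hp hd0 hd
  -- `B + ∑ r ∈ T with τ r < τ q, x r` counts the points on one side of the line through `p`
  -- swept up to just before `q`; `pq` is halving iff the sweep crosses level `(#S - 2) / 2`
  -- at `q`, which is what `f` detects.
  have hterm : ∀ q ∈ T, halvingSign S d p q
      = f (∑ r ∈ T with τ r < τ q, x r + x q) - f (∑ r ∈ T with τ r < τ q, x r) := by
    intro q hq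
    rw [halvingSign, isHalving_iff_card_filter_cotAngle hgp heven hp (mem_of_mem_erase hq)
      (ne_of_mem_erase hq) hd0 hd, ← Nat.cast_inj (R := ℤ), card_filter_pos_mul_sub_eq hτ hdT hq]
    rcases (hdT q hq).lt_or_gt with h | h
    · simp only [x, f, B, sign_neg h, SignType.coe_neg_one, h, reduceIte]
      split_ifs <;> omega
    · simp only [x, f, B, sign_pos h, SignType.coe_one, h.not_gt, reduceIte]
      split_ifs <;> omega
  rw [← sum_erase S (a := p) (by simp [halvingSign, IsHalving]), sum_congr rfl hterm,
    sum_telescope_of_injOn τ x f hτ]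
  simp only [f]
  split_ifs <;> norm_num

open Filter Topology in
lemma exists_det2_ne_zero_of_ne_and_pos_of_dot2_lt (S : Finset (ℝ × ℝ)) {a : ℝ × ℝ} (ha : a ≠ 0) :
    ∃ d : ℝ × ℝ, (∀ x ∈ S, ∀ y ∈ S, x ≠ y → det2 d (x - y) ≠ 0) ∧
      ∀ x ∈ S, ∀ y ∈ S, dot2 a x < dot2 a y → 0 < det2 d (y - x) := by
  have hperturb : ∀ ε v, det2 (a.2 + ε * a.1, -a.1 + ε * a.2) v = dot2 a v + ε * det2 a v := by
    intro ε v; simp only [det2, dot2]; ring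
  have hcont : ∀ v, Continuous fun ε : ℝ => dot2 a v + ε * det2 a v := by fun_prop
  have hne : ∀ v ≠ 0, ∀ᶠ ε in 𝓝[>] 0, dot2 a v + ε * det2 a v ≠ 0 := by
    intro v hv
    by_cases h0 : dot2 a v = 0
    · have hdet : det2 a v ≠ 0 := by
        intro h
        have := dot2_sq_add_det2_sq a v
        rw [h0, h] at this
        nlinarith [dot2_self_pos ha, dot2_self_pos hv]
      filter_upwards [self_mem_nhdsWithin] with ε hε
      simpa [h0] using ⟨hε.ne', hdet⟩
    · exact nhdsWithin_le_nhds ((hcont v).continuousAt.eventually_ne (by simpa using h0))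
  have hpos : ∀ v, 0 < dot2 a v → ∀ᶠ ε in 𝓝[>] 0, 0 < dot2 a v + ε * det2 a v := fun v hv =>
    nhdsWithin_le_nhds (continuousAt_const.eventually_lt (hcont v).continuousAt (by simpa using hv))
  have : ∀ᶠ ε in 𝓝[>] (0 : ℝ),
      (∀ x ∈ S, ∀ y ∈ S, x ≠ y → dot2 a (x - y) + ε * det2 a (x - y) ≠ 0) ∧
      ∀ x ∈ S, ∀ y ∈ S, dot2 a x < dot2 a y → 0 < dot2 a (y - x) + ε * det2 a (y - x) := by
    simp only [eventually_and, eventually_all_finset, eventually_imp_distrib_left]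
    refine ⟨fun x _ y _ hxy => hne _ (sub_ne_zero.2 hxy), fun x _ y _ hxy => hpos _ ?_⟩
    simp only [dot2, Prod.fst_sub, Prod.snd_sub] at hxy ⊢
    linarith
  obtain ⟨ε, hgen, hsep⟩ := this.exists
  exact ⟨(a.2 + ε * a.1, -a.1 + ε * a.2), by simpa only [hperturb] using hgen,
    by simpa only [hperturb] using hsep⟩

open scoped Classical in
lemma ncard_straddling_halving_eq_card (S : Finset (ℝ × ℝ)) (a : ℝ × ℝ) (c : ℝ) :
    {s : Finset (ℝ × ℝ) | ∃ P Q : ℝ × ℝ, s = {P, Q} ∧ IsHalving S P Q ∧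
        (dot2 a P - c) * (dot2 a Q - c) < 0}.ncard
      = #{e ∈ {x ∈ S | dot2 a x < c} ×ˢ {y ∈ S | c < dot2 a y} | IsHalving S e.1 e.2} := by
  set E := {e ∈ {x ∈ S | dot2 a x < c} ×ˢ {y ∈ S | c < dot2 a y} | IsHalving S e.1 e.2}
  have hE : ∀ e ∈ E, dot2 a e.1 < c ∧ c < dot2 a e.2 := fun e he => by
    simp only [E, mem_filter, mem_product] at he
    exact ⟨he.1.1.2, he.1.2.2⟩
  have hset : {s : Finset (ℝ × ℝ) | ∃ P Q : ℝ × ℝ, s = {P, Q} ∧ IsHalving S P Q ∧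
      (dot2 a P - c) * (dot2 a Q - c) < 0} = ↑(E.image fun e => ({e.1, e.2} : Finset (ℝ × ℝ))) := by
    ext s
    simp only [Set.mem_ofPred_eq, coe_image, Set.mem_image, mem_coe, E, mem_filter, mem_product]
    constructor
    · rintro ⟨P, Q, rfl, hPQ, hcross⟩
      rcases mul_neg_iff.1 hcross with ⟨hP, hQ⟩ | ⟨hP, hQ⟩
      · exact ⟨(Q, P), ⟨⟨⟨hPQ.2.1, by linarith⟩, hPQ.1, by linarith⟩, hPQ.symm⟩, pair_comm Q P⟩
      · exact ⟨(P, Q), ⟨⟨⟨hPQ.1, by linarith⟩, hPQ.2.1, by linarith⟩, hPQ⟩, rfl⟩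
    · rintro ⟨⟨P, Q⟩, ⟨⟨⟨-, hP⟩, -, hQ⟩, hPQ⟩, rfl⟩
      exact ⟨P, Q, rfl, hPQ, mul_neg_of_neg_of_pos (by linarith) (by linarith)⟩
  rw [hset, Set.ncard_coe_finset]
  refine card_image_of_injOn fun e he e' he' h => ?_
  obtain ⟨hl, hr⟩ := hE e he
  obtain ⟨hl', hr'⟩ := hE e' he'
  have hmem : ∀ z, z ∈ ({e.1, e.2} : Finset (ℝ × ℝ)) ↔ z = e'.1 ∨ z = e'.2 := fun z => by
    rw [show ({e.1, e.2} : Finset (ℝ × ℝ)) = {e'.1, e'.2} from h, mem_insert, mem_singleton]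
  rcases (hmem e.1).1 (by simp) with h1 | h1
  · rcases (hmem e.2).1 (by simp) with h2 | h2
    · rw [h2] at hr; linarith
    · exact Prod.ext h1 h2
  · rw [h1] at hl; linarith

theorem stmt_16_general (S : Finset (ℝ × ℝ)) (heven : Even S.card)
    (hgp : GenPos S) (a : ℝ × ℝ) (c : ℝ) (ha : a ≠ 0)
    (hmiss : ∀ P ∈ S, dot2 a P ≠ c) :
    2 * {s : Finset (ℝ × ℝ) | ∃ P Q : ℝ × ℝ, s = {P, Q} ∧ IsHalving S P Q ∧
          (dot2 a P - c) * (dot2 a Q - c) < 0}.ncard ≤ S.card := by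
  classical
  rw [ncard_straddling_halving_eq_card]
  obtain ⟨d, hgen, hsep⟩ := exists_det2_ne_zero_of_ne_and_pos_of_dot2_lt S ha
  set L := {x ∈ S | dot2 a x < c}
  set R := {y ∈ S | c < dot2 a y}
  have hLR : L ∪ R = S := by
    rw [← filter_or, filter_true_of_mem fun x hx => (hmiss x hx).lt_or_gt]
  have hdisj : Disjoint L R := disjoint_filter.2 fun x _ h => h.asymm
  have hcross : ∑ p ∈ L, ∑ q ∈ R, halvingSign S d p q = #{e ∈ L ×ˢ R | IsHalving S e.1 e.2} := by
    rw [natCast_card_filter, sum_product]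
    refine sum_congr rfl fun p hp => sum_congr rfl fun q hq => ?_
    rw [mem_filter] at hp hq
    exact halvingSign_of_det2_pos (hsep p hp.1 q hq.1 (hp.2.trans hq.2))
  have hbound := two_mul_sum_sum_le_card_add_card hdisj (halvingSign_swap S d) (by
    rw [hLR]
    exact fun p hp => abs_sum_halvingSign_le_one hgp heven hp fun q hq hqp => hgen q hq p hp hqp)
  have hcard : #S = #L + #R := by rw [← card_union_of_disjoint hdisj, hLR]
  omega

/-- if `w` halving segments of `S` straddle a line through no
point of `S`, then `n ≥ 2w`. -/
theorem stmt_16 (S : Finset (ℝ × ℝ)) (heven : Even S.card) (h4 : 4 ≤ S.card)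
    (hgp : GenPos S) (a : ℝ × ℝ) (c : ℝ) (ha : a ≠ 0)
    (hmiss : ∀ P ∈ S, dot2 a P ≠ c) :
    2 * {s : Finset (ℝ × ℝ) | ∃ P Q : ℝ × ℝ, s = {P, Q} ∧ IsHalving S P Q ∧
          (dot2 a P - c) * (dot2 a Q - c) < 0}.ncard ≤ S.card :=
  stmt_16_general S heven hgp a c ha hmiss
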